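/- In the conformal geometric algebra of the plane, sandwiching with the vector e implements inversion: -e F(x) e = x² F(x/x²) for any nonzero vector x in span(e₁,e₂), so that as a projective (homogeneous) null vector, -eF(x)e represents the inverted point x/x². -/

import Mathlib

/-!
`F(x)` is the vector `2x + (x² - 1) e + (x² + 1) ē`. Since `e² = 1`, the sandwich `-e v e` is the
reflection `v ↦ v - 2⟨e, v⟩ e`, which only flips the sign of the `e`-coordinate, giving
`2x + (1 - x²) e + (x² + 1) ē`; and this is `x²` times `F(x/x²)` because `(x/x²)² = 1/x²`.
-/

noncomputable section
open CliffordAlgebra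

/-- The quadratic form of signature (+,+,+,-) for the conformal geometric algebra of the
plane: generators e₁, e₂, e, ē with e₁² = e₂² = e² = 1 and ē² = -1. -/
def Q31 : QuadraticForm ℝ (Fin 4 → ℝ) :=
  QuadraticMap.weightedSumSquares ℝ ![(1 : ℝ), 1, 1, -1]

/-- The conformal geometric algebra Cl(3,1) of the plane. -/
abbrev CGA := CliffordAlgebra Q31

/-- The generators: `g 0 = e₁`, `g 1 = e₂`, `g 2 = e`, `g 3 = ē`. -/
def g (i : Fin 4) : CGA := ι Q31 (Pi.single i 1)

/-- The null vector `n = e + ē`. -/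
def nv : CGA := g 2 + g 3

/-- The null vector `n̄ = e - ē`. -/
def nbv : CGA := g 2 - g 3

/-- The conformal embedding `F(x) = x² n + 2x - n̄` of a point `x` of the plane. -/
def Fc (x : Fin 2 → ℝ) : CGA :=
  (x 0 ^ 2 + x 1 ^ 2) • nv + (2 : ℝ) • (x 0 • g 0 + x 1 • g 1) - nbv

theorem CliffordAlgebra.neg_ι_mul_ι_mul_ι_of_eq_one {R M : Type*} [CommRing R] [AddCommGroup M]
    [Module R M] {Q : QuadraticForm R M} {a : M} (ha : Q a = 1) (b : M) :
    -(ι Q a * ι Q b * ι Q a) = ι Q (b - QuadraticMap.polar Q a b • a) := by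
  rw [ι_mul_ι_mul_ι, ha, one_smul, ← map_neg, neg_sub]

-- `F(x) = x² n + 2x - n̄ = 2x + (x² - 1) e + (x² + 1) ē`
def confVec (x : Fin 2 → ℝ) : Fin 4 → ℝ :=
  ![2 * x 0, 2 * x 1, x 0 ^ 2 + x 1 ^ 2 - 1, x 0 ^ 2 + x 1 ^ 2 + 1]

theorem Fc_eq_ι_confVec (x : Fin 2 → ℝ) : Fc x = ι Q31 (confVec x) := by
  have hvec : confVec x = (x 0 ^ 2 + x 1 ^ 2) • (Pi.single 2 1 + Pi.single 3 1) +
      (2 : ℝ) • (x 0 • Pi.single 0 1 + x 1 • Pi.single 1 1) - (Pi.single 2 1 - Pi.single 3 1) := by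
    ext i; fin_cases i <;> simp [confVec]
  simp only [Fc, nv, nbv, g, hvec, map_add, map_sub, map_smul]

theorem Q31_single_two : Q31 (Pi.single 2 1) = 1 := by
  simp [Q31, QuadraticMap.weightedSumSquares_apply, Fin.sum_univ_four]

theorem polar_Q31_single_two (v : Fin 4 → ℝ) :
    QuadraticMap.polar Q31 (Pi.single 2 1) v = 2 * v 2 := by
  simp only [QuadraticMap.polar, Q31, QuadraticMap.weightedSumSquares_apply, Pi.add_apply,
    smul_eq_mul, Fin.sum_univ_four, Matrix.cons_val_zero, Matrix.cons_val_one, Matrix.cons_val,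
    ne_eq, Fin.reduceEq, not_false_eq_true, Pi.single_eq_of_ne, Pi.single_eq_same]
  ring

theorem confVec_inversion {x : Fin 2 → ℝ} (hx : x 0 ^ 2 + x 1 ^ 2 ≠ 0) :
    confVec x - (2 * confVec x 2) • Pi.single 2 1 =
      (x 0 ^ 2 + x 1 ^ 2) • confVec (fun i => x i / (x 0 ^ 2 + x 1 ^ 2)) := by
  ext i; fin_cases i <;> simp [confVec] <;> field_simp <;> ring

theorem sq_add_sq_ne_zero_of_ne_zero {x : Fin 2 → ℝ} (hx : x ≠ 0) : x 0 ^ 2 + x 1 ^ 2 ≠ 0 := by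
  contrapose! hx
  obtain ⟨h0, h1⟩ := (add_eq_zero_iff_of_nonneg (sq_nonneg _) (sq_nonneg _)).mp hx
  ext i
  fin_cases i
  exacts [pow_eq_zero_iff two_ne_zero |>.mp h0, pow_eq_zero_iff two_ne_zero |>.mp h1]

/-- Sandwiching with the vector `e` implements inversion:
`-e F(x) e = x² F(x/x²)` for every nonzero `x` in the plane, so that projectively (conformal
points being homogeneous null vectors, defined up to nonzero scalar) `-e F(x) e` represents
the inverted point `x/x²`. -/
theorem inversion_versor_acts (x : Fin 2 → ℝ) (hx : x ≠ 0) :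
    -(g 2 * Fc x * g 2) =
      (x 0 ^ 2 + x 1 ^ 2) • Fc (fun i => x i / (x 0 ^ 2 + x 1 ^ 2)) := by
  rw [Fc_eq_ι_confVec, Fc_eq_ι_confVec, g, neg_ι_mul_ι_mul_ι_of_eq_one Q31_single_two,
    polar_Q31_single_two, confVec_inversion (sq_add_sq_ne_zero_of_ne_zero hx), map_smul]
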